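/- arXiv:1811.03613 — 3 statements merged into one kernel-verified Lean document; each statement's English description precedes it below -/
import Mathlib

section
/- For every z = (u,v,w) in the unit sphere S^5 ⊂ ℂ³ (i.e. |u|²+|v|²+|w|²=1), the 3×3 complex matrix θ(z) with rows (u², vu+w̄, wu−v̄), (uv−w̄, v², wv+ū), (uw+v̄, vw−ū, w²) is a special unitary matrix, i.e. θ(z) ∈ SU(3). -/
/-!
Write `K a` for the matrix of `x ↦ x ⨯₃ a`. Then `θ(z) = z zᵀ + K z̄`. Since `K a` kills `a` on
both sides, the cross terms of `θ θᴴ` vanish, and the vector triple product gives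
`K z̄ (K z̄)ᴴ = 1 - z z*`, so `θ θᴴ = z z* + (1 - z z*) = 1`. As `K a` is skew-symmetric with
adjugate `a aᵀ`, the matrix determinant lemma gives `det θ = (z̄ ⬝ z)² = 1`.
-/

namespace Matrix

variable {R : Type*} [CommRing R]

def crossMatrix (a : Fin 3 → R) : Matrix (Fin 3) (Fin 3) R :=
  of ![![0, a 2, -a 1], ![-a 2, 0, a 0], ![a 1, -a 0, 0]]

theorem crossMatrix_mulVec (a x : Fin 3 → R) : crossMatrix a *ᵥ x = x ⨯₃ a := by
  ext i
  fin_cases i <;> simp [crossMatrix, cross_apply, mulVec, dotProduct, Fin.sum_univ_three] <;> ring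

theorem vecMul_crossMatrix (a x : Fin 3 → R) : x ᵥ* crossMatrix a = a ⨯₃ x := by
  ext i
  fin_cases i <;> simp [crossMatrix, cross_apply, vecMul, dotProduct, Fin.sum_univ_three] <;> ring

theorem crossMatrix_mul_vecMulVec_self (a c : Fin 3 → R) :
    crossMatrix a * vecMulVec a c = 0 := by
  rw [mul_vecMulVec, crossMatrix_mulVec, cross_self, zero_vecMulVec]

theorem vecMulVec_mul_crossMatrix_self (a c : Fin 3 → R) :
    vecMulVec c a * crossMatrix a = 0 := by
  rw [vecMulVec_mul, vecMul_crossMatrix, cross_self, vecMulVec_zero]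

theorem crossMatrix_mul_crossMatrix (a b : Fin 3 → R) :
    crossMatrix a * crossMatrix b = vecMulVec b a - (b ⬝ᵥ a) • 1 := by
  refine ext_of_mulVec_single fun i => ?_
  rw [← mulVec_mulVec, crossMatrix_mulVec, crossMatrix_mulVec, cross_cross_eq_smul_sub_smul,
    sub_mulVec, vecMulVec_mulVec, smul_mulVec, one_mulVec, dotProduct_comm]
  simp

theorem det_vecMulVec_add_crossMatrix (z a : Fin 3 → R) :
    det (vecMulVec z z + crossMatrix a) = (a ⬝ᵥ z) ^ 2 := by
  simp [det_fin_three, crossMatrix, vecMulVec_apply, vec3_dotProduct]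
  ring

section StarRing

variable [StarRing R]

theorem conjTranspose_crossMatrix (a : Fin 3 → R) :
    (crossMatrix a)ᴴ = -crossMatrix (star a) := by
  ext i j
  fin_cases i <;> fin_cases j <;> simp [crossMatrix]

theorem vecMulVec_add_crossMatrix_star_mem_specialUnitaryGroup {z : Fin 3 → R}
    (hz : star z ⬝ᵥ z = 1) :
    vecMulVec z z + crossMatrix (star z) ∈ specialUnitaryGroup (Fin 3) R := by
  have hz' : z ⬝ᵥ star z = 1 := by rw [dotProduct_comm, hz]
  refine mem_specialUnitaryGroup_iff.2 ⟨mem_unitaryGroup_iff.2 ?_, ?_⟩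
  · rw [star_eq_conjTranspose, conjTranspose_add, conjTranspose_vecMulVec,
      conjTranspose_crossMatrix, star_star, add_mul, mul_add, mul_add, mul_neg, mul_neg,
      vecMulVec_mul_vecMulVec, vecMulVec_mul_crossMatrix_self, crossMatrix_mul_vecMulVec_self,
      crossMatrix_mul_crossMatrix, hz', one_smul, one_smul]
    abel
  · rw [det_vecMulVec_add_crossMatrix, hz, one_pow]

end StarRing

end Matrix

open Matrix in
/-- The transition-function matrix `θ(u,v,w)` lies in `SU(3)` for `(u,v,w)` on the unit
sphere `S⁵ ⊂ ℂ³`. -/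
theorem theta_mem_specialUnitaryGroup (u v w : ℂ)
    (h : ‖u‖ ^ 2 + ‖v‖ ^ 2 + ‖w‖ ^ 2 = 1) :
    (Matrix.of ![![u ^ 2, v * u + star w, w * u - star v],
                 ![u * v - star w, v ^ 2, w * v + star u],
                 ![u * w + star v, v * w - star u, w ^ 2]]) ∈
      Matrix.specialUnitaryGroup (Fin 3) ℂ := by
  have hz : star ![u, v, w] ⬝ᵥ ![u, v, w] = 1 := by
    simp only [vec3_dotProduct, Pi.star_apply, cons_val, Complex.star_def, Complex.conj_mul']
    exact_mod_cast h
  convert vecMulVec_add_crossMatrix_star_mem_specialUnitaryGroup hz using 1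
  ext i j
  fin_cases i <;> fin_cases j <;> simp [crossMatrix] <;> ring
end

section
/- In the octonions (the Cayley–Dickson double of the quaternions), for all a, x, y: a·x·conj(y) + a·y·conj(x) = 2⟨x,y⟩·a, where ⟨x,y⟩ is the real inner product ⟨x,y⟩ = (x·conj(y) + y·conj(x))/2 ∈ ℝ and products are taken as (a x)·conj(y). -/
/-- The octonions, as the Cayley–Dickson double of the quaternions:
pairs `(a, b)` of quaternions with `(a,b)(u,v) = (au - v̄ b, b ū + v a)`. -/
@[ext] structure Oct where
  x : Quaternion ℝ
  y : Quaternion ℝ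

namespace Oct

noncomputable instance : Zero Oct := ⟨⟨0, 0⟩⟩
noncomputable instance : One Oct := ⟨⟨1, 0⟩⟩
noncomputable instance : Add Oct := ⟨fun p q => ⟨p.x + q.x, p.y + q.y⟩⟩
noncomputable instance : Neg Oct := ⟨fun p => ⟨-p.x, -p.y⟩⟩
noncomputable instance : Sub Oct := ⟨fun p q => p + -q⟩
noncomputable instance : Mul Oct := ⟨fun p q => ⟨p.x * q.x - star q.y * p.y, p.y * star q.x + q.y * p.x⟩⟩
noncomputable instance : SMul ℝ Oct := ⟨fun t p => ⟨t • p.x, t • p.y⟩⟩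

/-- Octonion conjugation: `(a, b)̄ = (ā, -b)`. -/
noncomputable def conj (p : Oct) : Oct := ⟨star p.x, -p.y⟩

/-- The real part of an octonion. -/
noncomputable def re (p : Oct) : ℝ := p.x.re

/-- The Euclidean inner product on the octonions: `⟨p, q⟩ = Re (p q̄)`. -/
noncomputable def inner (p q : Oct) : ℝ := (p * conj q).re

/-- The squared norm of an octonion. -/
noncomputable def normSq (p : Oct) : ℝ := inner p p

/-- The basic imaginary unit `i` of the octonions. -/
noncomputable def i : Oct := ⟨⟨0, 1, 0, 0⟩, 0⟩

/-- The inverse of an octonion: `r⁻¹ = r̄ / |r|²`. -/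
noncomputable def inv (p : Oct) : Oct := (normSq p)⁻¹ • conj p

end Oct

/-! Write `a = (a₁, a₂)`, `x = (u, v)`, `y = (u', v')`. Expanding the Cayley–Dickson products
componentwise, the terms mixing the two quaternion halves cancel in pairs, and what remains in the
first half is `a₁(uū' + u'ū) + (v̄'v + v̄v')a₁`. Both brackets are real, namely `2⟨u,u'⟩` and
`2⟨v,v'⟩`, hence central in `ℍ`; the second half is analogous. -/

open scoped InnerProductSpace

namespace Quaternion

theorem inner_star_star (p q : ℍ) : ⟪star p, star q⟫_ℝ = ⟪p, q⟫_ℝ := by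
  simp only [inner_def, star_star, re_mul, re_star, imI_star, imJ_star, imK_star]
  ring

theorem mul_star_add_mul_star (p q : ℍ) : p * star q + q * star p = ↑(2 * ⟪p, q⟫_ℝ) := by
  rw [← star_star (q * star p), star_mul, star_star, self_add_star', inner_def]

theorem star_mul_add_star_mul (p q : ℍ) : star p * q + star q * p = ↑(2 * ⟪p, q⟫_ℝ) := by
  simpa only [star_star, inner_star_star] using mul_star_add_mul_star (star p) (star q)

theorem mul_coe_add_coe_mul {R : Type*} [CommRing R] (a : ℍ[R]) (r s : R) :
    a * ↑r + ↑s * a = (r + s) • a := by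
  rw [mul_coe_eq_smul, coe_mul_eq_smul, add_smul]

end Quaternion

namespace Oct

variable (p q : Oct) (t : ℝ)

@[simp] theorem x_add : (p + q).x = p.x + q.x := rfl
@[simp] theorem y_add : (p + q).y = p.y + q.y := rfl
@[simp] theorem x_mul : (p * q).x = p.x * q.x - star q.y * p.y := rfl
@[simp] theorem y_mul : (p * q).y = p.y * star q.x + q.y * p.x := rfl
@[simp] theorem x_smul : (t • p).x = t • p.x := rfl
@[simp] theorem y_smul : (t • p).y = t • p.y := rfl
@[simp] theorem x_conj : (conj p).x = star p.x := rfl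
@[simp] theorem y_conj : (conj p).y = -p.y := rfl

theorem inner_eq : inner p q = ⟪p.x, q.x⟫_ℝ + ⟪p.y, q.y⟫_ℝ := by
  have re_star_mul : (star q.y * p.y).re = ⟪p.y, q.y⟫_ℝ := by
    rw [real_inner_comm, ← Quaternion.inner_star_star, Quaternion.inner_def, star_star]
  rw [inner, re, x_mul, y_conj, star_neg, neg_mul, sub_neg_eq_add, Quaternion.re_add, x_conj,
    re_star_mul, ← Quaternion.inner_def]

end Oct

open Quaternion in
/-- In the octonions, `(ax)ȳ + (ay)x̄ = 2⟨x,y⟩ a`. -/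
theorem oct_mul_conj_add (a x y : Oct) :
    (a * x) * Oct.conj y + (a * y) * Oct.conj x = (2 * Oct.inner x y) • a := by
  ext1
  · calc _ = a.x * (x.x * star y.x + y.x * star x.x)
              + (star y.y * x.y + star x.y * y.y) * a.x := by
          simp only [Oct.x_add, Oct.x_mul, Oct.y_mul, Oct.x_conj, Oct.y_conj, star_neg]
          noncomm_ring
      _ = _ := by
        rw [mul_star_add_mul_star, star_mul_add_star_mul, mul_coe_add_coe_mul, Oct.x_smul,
          Oct.inner_eq, real_inner_comm x.y, mul_add]
  · calc _ = a.y * (star x.x * y.x + star y.x * x.x)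
              + (x.y * star y.y + y.y * star x.y) * a.y := by
          simp only [Oct.y_add, Oct.x_mul, Oct.y_mul, Oct.x_conj, Oct.y_conj, star_star]
          noncomm_ring
      _ = _ := by
        rw [star_mul_add_star_mul, mul_star_add_mul_star, mul_coe_add_coe_mul, Oct.y_smul,
          Oct.inner_eq, mul_add]
end

section
/- If a non-real octonion r satisfies 4·(Re r)² = |r|², then its cube r³ is a real number; conversely, if r is a non-real octonion with r³ real, then 4·(Re r)² = |r|². -/
lemma Quaternion.mul_self_eq_two_re_smul_sub_normSq (a : Quaternion ℝ) :
    a * a = (2 * a.re) • a - ((Quaternion.normSq a : ℝ) : Quaternion ℝ) := by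
  rw [← Quaternion.coe_mul_eq_smul, ← Quaternion.self_add_star', add_mul,
    Quaternion.star_mul_self, add_sub_cancel_right]

namespace Oct

@[simp] lemma one_x : (1 : Oct).x = 1 := rfl
@[simp] lemma one_y : (1 : Oct).y = 0 := rfl
@[simp] lemma sub_x (p q : Oct) : (p - q).x = p.x - q.x := (sub_eq_add_neg _ _).symm
@[simp] lemma sub_y (p q : Oct) : (p - q).y = p.y - q.y := (sub_eq_add_neg _ _).symm
@[simp] lemma smul_x (t : ℝ) (p : Oct) : (t • p).x = t • p.x := rfl
@[simp] lemma smul_y (t : ℝ) (p : Oct) : (t • p).y = t • p.y := rfl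
@[simp] lemma mul_x (p q : Oct) : (p * q).x = p.x * q.x - star q.y * p.y := rfl
@[simp] lemma mul_y (p q : Oct) : (p * q).y = p.y * star q.x + q.y * p.x := rfl
@[simp] lemma conj_x (p : Oct) : (conj p).x = star p.x := rfl
@[simp] lemma conj_y (p : Oct) : (conj p).y = -p.y := rfl

instance : SMul ℕ Oct := ⟨fun n p => ⟨n • p.x, n • p.y⟩⟩
instance : SMul ℤ Oct := ⟨fun n p => ⟨n • p.x, n • p.y⟩⟩

def toProd (p : Oct) : Quaternion ℝ × Quaternion ℝ := (p.x, p.y)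

lemma toProd_injective : Function.Injective toProd :=
  fun _ _ h => Oct.ext (congrArg Prod.fst h) (congrArg Prod.snd h)

noncomputable instance : AddCommGroup Oct :=
  toProd_injective.addCommGroup _ rfl (fun _ _ => rfl) (fun _ => rfl)
    (fun _ _ => Prod.ext (sub_eq_add_neg _ _).symm (sub_eq_add_neg _ _).symm)
    (fun _ _ => rfl) (fun _ _ => rfl)

noncomputable instance : Module ℝ Oct :=
  toProd_injective.module ℝ ⟨⟨toProd, rfl⟩, fun _ _ => rfl⟩ fun _ _ => rfl

protected lemma mul_sub (r p q : Oct) : r * (p - q) = r * p - r * q := by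
  ext <;> simp [mul_sub, sub_mul] <;> abel

protected lemma mul_smul_comm (r : Oct) (t : ℝ) (p : Oct) : r * (t • p) = t • (r * p) := by
  ext <;> simp [smul_sub, smul_add]

protected lemma mul_one (r : Oct) : r * 1 = r := by
  ext <;> simp

lemma normSq_eq (p : Oct) : normSq p = Quaternion.normSq p.x + Quaternion.normSq p.y := by
  simp [normSq, inner, re, Quaternion.self_mul_star, Quaternion.star_mul_self]

lemma mul_self_eq_two_re_smul_sub_normSq (r : Oct) : r * r = (2 * re r) • r - normSq r • 1 := by
  apply Oct.ext
  · simp only [mul_x, sub_x, smul_x, one_x, normSq_eq, re]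
    rw [Quaternion.mul_self_eq_two_re_smul_sub_normSq, Quaternion.star_mul_self, add_smul,
      ← Algebra.algebraMap_eq_smul_one, ← Algebra.algebraMap_eq_smul_one,
      Quaternion.algebraMap_def, sub_sub]
  · simp only [mul_y, sub_y, smul_y, one_y, smul_zero, sub_zero, re]
    rw [← mul_add, Quaternion.star_add_self', Quaternion.mul_coe_eq_smul]

lemma mul_mul_self_eq (r : Oct) :
    r * (r * r) = (4 * re r ^ 2 - normSq r) • r - (2 * re r * normSq r) • 1 := by
  calc r * (r * r) = r * ((2 * re r) • r - normSq r • 1) := by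
        rw [mul_self_eq_two_re_smul_sub_normSq]
    _ = (2 * re r) • (r * r) - normSq r • r := by
        rw [Oct.mul_sub, Oct.mul_smul_comm, Oct.mul_smul_comm, Oct.mul_one]
    _ = (2 * re r) • ((2 * re r) • r - normSq r • 1) - normSq r • r := by
        rw [mul_self_eq_two_re_smul_sub_normSq]
    _ = (4 * re r ^ 2 - normSq r) • r - (2 * re r * normSq r) • 1 := by module

end Oct

/-- A non-real octonion `r` has real cube `r³` if and only if `4 (Re r)² = |r|²`. -/
theorem oct_cube_real_iff (r : Oct) (hr : ¬ ∃ t : ℝ, r = t • (1 : Oct)) :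
    ((4 * Oct.re r ^ 2 = Oct.normSq r → ∃ s : ℝ, r * (r * r) = s • (1 : Oct)) ∧
     ((∃ s : ℝ, r * (r * r) = s • (1 : Oct)) → 4 * Oct.re r ^ 2 = Oct.normSq r)) := by
  rw [Oct.mul_mul_self_eq]
  set c := 4 * Oct.re r ^ 2 - Oct.normSq r with hc
  set d := 2 * Oct.re r * Oct.normSq r
  constructor
  · intro h
    exact ⟨-d, by rw [hc, h, sub_self, zero_smul, zero_sub, neg_smul]⟩
  · rintro ⟨s, hs⟩
    by_contra hne
    have hc0 : c ≠ 0 := sub_ne_zero.mpr hne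
    have hcr : c • r = (s + d) • (1 : Oct) := by rw [add_smul, ← hs]; abel
    exact hr ⟨c⁻¹ * (s + d), by rw [mul_smul, ← hcr, inv_smul_smul₀ hc0]⟩
end
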